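/- Let 0 < a < b, μ > 0 and α > 0. Let v : ℝ² → ℝ² be twice continuously differentiable and w : ℝ² → ℝ² continuously differentiable on a neighborhood of the closed annulus {x : a ≤ |x| ≤ b}. Suppose v(x)·x = 0 and w(x)·x = 0 whenever |x| ∈ {a, b}, that ∂₁v₂(x) − ∂₂v₁(x) = 0 whenever |x| = b, and that v satisfies the Navier-slip condition on |x| = a. Then −∫_Ω Δv(x)·w(x) dx = ∫_Ω Σ_{i,j=1}² ∂ᵢvⱼ(x) ∂ᵢwⱼ(x) dx + (1/a − α/μ) ∮_{∂B(0,a)} v_τ w_τ ds + (1/b) ∮_{∂B(0,b)} v_τ w_τ ds. -/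

import Mathlib

open Real MeasureTheory

noncomputable section

/-- Partial derivative `∂₁ f` of a scalar function on `ℝ²`. -/
def pd1 (f : ℝ × ℝ → ℝ) : ℝ × ℝ → ℝ := fun x => fderiv ℝ f x (1, 0)

/-- Partial derivative `∂₂ f` of a scalar function on `ℝ²`. -/
def pd2 (f : ℝ × ℝ → ℝ) : ℝ × ℝ → ℝ := fun x => fderiv ℝ f x (0, 1)

/-- First component of a vector field on `ℝ²`. -/
def cmp1 (v : ℝ × ℝ → ℝ × ℝ) : ℝ × ℝ → ℝ := fun x => (v x).1

/-- Second component of a vector field on `ℝ²`. -/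
def cmp2 (v : ℝ × ℝ → ℝ × ℝ) : ℝ × ℝ → ℝ := fun x => (v x).2

/-- The open annulus `Ω = {x ∈ ℝ² : a < |x| < b}`. -/
def ann (a b : ℝ) : Set (ℝ × ℝ) := {x | a ^ 2 < x.1 ^ 2 + x.2 ^ 2 ∧ x.1 ^ 2 + x.2 ^ 2 < b ^ 2}

/-- The closed annulus `{x ∈ ℝ² : a ≤ |x| ≤ b}`. -/
def cann (a b : ℝ) : Set (ℝ × ℝ) := {x | a ^ 2 ≤ x.1 ^ 2 + x.2 ^ 2 ∧ x.1 ^ 2 + x.2 ^ 2 ≤ b ^ 2}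

/-- The circle `∂B(0, r) = {x ∈ ℝ² : |x| = r}`. -/
def circ (r : ℝ) : Set (ℝ × ℝ) := {x | x.1 ^ 2 + x.2 ^ 2 = r ^ 2}

/-- Boundary integral `∮_{∂B(0,r)} f ds = ∫₀^{2π} f(r cos θ, r sin θ) r dθ`. -/
def bInt (r : ℝ) (f : ℝ × ℝ → ℝ) : ℝ :=
  ∫ θ in (0 : ℝ)..(2 * π), f (r * Real.cos θ, r * Real.sin θ) * r

/-- Tangential component `v_τ(x) = v(x)·(x₂, −x₁)/r` on the circle of radius `r`. -/
def tang (r : ℝ) (v : ℝ × ℝ → ℝ × ℝ) : ℝ × ℝ → ℝ :=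
  fun x => ((v x).1 * x.2 - (v x).2 * x.1) / r

/-- The Navier-slip condition on the inner circle `|x| = a`:
`μ Σ_{i,j} τ_i(x) n_j(x) (∂_i v_j(x) + ∂_j v_i(x)) = α v(x)·τ(x)` for all `|x| = a`,
where `n(x) = −x/a` and `τ(x) = (x₂, −x₁)/a`. -/
def navierSlip (μ α a : ℝ) (v : ℝ × ℝ → ℝ × ℝ) : Prop :=
  ∀ x : ℝ × ℝ, x.1 ^ 2 + x.2 ^ 2 = a ^ 2 →
    μ * ((x.2 / a) * (-(x.1 / a)) * (pd1 (cmp1 v) x + pd1 (cmp1 v) x)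
       + (x.2 / a) * (-(x.2 / a)) * (pd1 (cmp2 v) x + pd2 (cmp1 v) x)
       + (-(x.1 / a)) * (-(x.1 / a)) * (pd2 (cmp1 v) x + pd1 (cmp2 v) x)
       + (-(x.1 / a)) * (-(x.2 / a)) * (pd2 (cmp2 v) x + pd2 (cmp2 v) x))
    = α * ((v x).1 * (x.2 / a) + (v x).2 * (-(x.1 / a)))

/-!
Green's first identity `∫ Δv·w + ∫ ∇v:∇w = ∮ w·∂_ν v` is the divergence theorem for the field
`F_j = Σᵢ wᵢ ∂ⱼvᵢ`. On the annulus it follows from the divergence theorem on the rectangle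
`[a, b] × [-π, π]` of polar coordinates, because `r · div F = ∂_r (r F_r) + ∂_θ F_θ` there.

On each boundary circle `w` is tangent, so only the tangential part of `∂_ν v` contributes.
Differentiating `v·x = 0` along the circle expresses `x·∂_τ v` through `v_τ`; the vanishing
curl (outer circle) or the Navier-slip condition (inner circle) then trades `x·∂_τ v` for
`τ·∂_ν v`, which yields the boundary weights `-1/b` and `1/a - α/μ`.
-/

open Set

section PartialDerivatives

variable {f : ℝ × ℝ → ℝ}

lemma fderiv_apply_eq_pd (f : ℝ × ℝ → ℝ) (x u : ℝ × ℝ) :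
    fderiv ℝ f x u = u.1 * pd1 f x + u.2 * pd2 f x := by
  conv_lhs => rw [show u = u.1 • ((1 : ℝ), (0 : ℝ)) + u.2 • ((0 : ℝ), (1 : ℝ)) by simp]
  rw [map_add, map_smul, map_smul]
  rfl

lemma DifferentiableAt.hasDerivAt_comp_curve {γ : ℝ → ℝ × ℝ} {γ' : ℝ × ℝ} {t : ℝ}
    (hf : DifferentiableAt ℝ f (γ t)) (hγ : HasDerivAt γ γ' t) :
    HasDerivAt (fun s => f (γ s)) (γ'.1 * pd1 f (γ t) + γ'.2 * pd2 f (γ t)) t := by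
  rw [← fderiv_apply_eq_pd]
  exact hf.hasFDerivAt.comp_hasDerivAt t hγ

lemma pd1_eq_of_hasDerivAt {r θ d : ℝ} (hf : DifferentiableAt ℝ f (r, θ))
    (hd : HasDerivAt (fun s => f (s, θ)) d r) : pd1 f (r, θ) = d := by
  have h := hf.hasDerivAt_comp_curve (γ := fun s => (s, θ))
    ((hasDerivAt_id' r).prodMk (hasDerivAt_const r θ))
  simp only [one_mul, zero_mul, add_zero] at h
  exact h.unique hd

lemma pd2_eq_of_hasDerivAt {r θ d : ℝ} (hf : DifferentiableAt ℝ f (r, θ))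
    (hd : HasDerivAt (fun t => f (r, t)) d θ) : pd2 f (r, θ) = d := by
  have h := hf.hasDerivAt_comp_curve (γ := fun t => (r, t))
    ((hasDerivAt_const θ r).prodMk (hasDerivAt_id' θ))
  simp only [one_mul, zero_mul, zero_add] at h
  exact h.unique hd

lemma ContDiffOn.pd1 {n m : WithTop ℕ∞} {U : Set (ℝ × ℝ)} (hf : ContDiffOn ℝ n f U)
    (hU : IsOpen U) (hmn : m + 1 ≤ n) : ContDiffOn ℝ m (pd1 f) U :=
  (hf.fderiv_of_isOpen hU hmn).clm_apply contDiffOn_const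

lemma ContDiffOn.pd2 {n m : WithTop ℕ∞} {U : Set (ℝ × ℝ)} (hf : ContDiffOn ℝ n f U)
    (hU : IsOpen U) (hmn : m + 1 ≤ n) : ContDiffOn ℝ m (pd2 f) U :=
  (hf.fderiv_of_isOpen hU hmn).clm_apply contDiffOn_const

lemma fderiv_mul_add_mul_apply {E : Type*} [NormedAddCommGroup E] [NormedSpace ℝ E]
    {f₁ g₁ f₂ g₂ : E → ℝ} {x : E} (hf₁ : DifferentiableAt ℝ f₁ x)
    (hg₁ : DifferentiableAt ℝ g₁ x) (hf₂ : DifferentiableAt ℝ f₂ x)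
    (hg₂ : DifferentiableAt ℝ g₂ x) (u : E) :
    fderiv ℝ (fun y => f₁ y * g₁ y + f₂ y * g₂ y) x u
      = fderiv ℝ f₁ x u * g₁ x + f₁ x * fderiv ℝ g₁ x u
        + (fderiv ℝ f₂ x u * g₂ x + f₂ x * fderiv ℝ g₂ x u) := by
  rw [fderiv_fun_add (hf₁.fun_mul hg₁) (hf₂.fun_mul hg₂), fderiv_fun_mul hf₁ hg₁,
    fderiv_fun_mul hf₂ hg₂]
  simp only [add_apply, smul_apply, smul_eq_mul]
  ring

lemma tangential_pd_eq_zero {r : ℝ} {x : ℝ × ℝ} (hx : x ∈ circ r)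
    (hf : DifferentiableAt ℝ f x) (h0 : ∀ y ∈ circ r, f y = 0) :
    -x.2 * pd1 f x + x.1 * pd2 f x = 0 := by
  set γ : ℝ → ℝ × ℝ := fun t => (x.1 * cos t - x.2 * sin t, x.1 * sin t + x.2 * cos t)
  have hγ₀ : γ 0 = x := by simp [γ]
  have hγ : HasDerivAt γ (-x.2, x.1) 0 := by
    simpa using (((hasDerivAt_cos 0).const_mul x.1).sub ((hasDerivAt_sin 0).const_mul x.2)).prodMk
      (((hasDerivAt_sin 0).const_mul x.1).add ((hasDerivAt_cos 0).const_mul x.2))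
  have hγ_circ : ∀ t, γ t ∈ circ r := fun t => by
    simp only [circ, mem_ofPred_eq, γ] at hx ⊢
    linear_combination hx + (x.1 ^ 2 + x.2 ^ 2) * sin_sq_add_cos_sq t
  have hd := (hγ₀ ▸ hf).hasDerivAt_comp_curve hγ
  rw [hγ₀, show (fun s => f (γ s)) = fun _ => 0 from funext fun t => h0 _ (hγ_circ t)] at hd
  exact hd.unique (hasDerivAt_const 0 0)

end PartialDerivatives

section Annulus

variable {a b : ℝ}

lemma isOpen_ann (a b : ℝ) : IsOpen (ann a b) :=
  (isOpen_lt continuous_const (by fun_prop : Continuous fun x : ℝ × ℝ => x.1 ^ 2 + x.2 ^ 2)).inter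
    (isOpen_lt (by fun_prop : Continuous fun x : ℝ × ℝ => x.1 ^ 2 + x.2 ^ 2) continuous_const)

lemma isCompact_cann (a b : ℝ) : IsCompact (cann a b) := by
  refine Metric.isCompact_of_isClosed_isBounded ?_
    ((Metric.isBounded_closedBall (x := 0) (r := |b|)).subset fun x hx => ?_)
  · exact (isClosed_le continuous_const
      (by fun_prop : Continuous fun x : ℝ × ℝ => x.1 ^ 2 + x.2 ^ 2)).inter
      (isClosed_le (by fun_prop : Continuous fun x : ℝ × ℝ => x.1 ^ 2 + x.2 ^ 2) continuous_const)
  · rw [mem_closedBall_zero_iff, Prod.norm_def, Real.norm_eq_abs, Real.norm_eq_abs, max_le_iff,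
      ← sq_le_sq, ← sq_le_sq]
    exact ⟨by nlinarith [hx.2], by nlinarith [hx.2]⟩

lemma circ_subset_cann_left (ha : 0 ≤ a) (hab : a ≤ b) : circ a ⊆ cann a b :=
  fun x hx => ⟨hx.ge, hx.trans_le (by nlinarith)⟩

lemma circ_subset_cann_right (ha : 0 ≤ a) (hab : a ≤ b) : circ b ⊆ cann a b :=
  fun x hx => ⟨(show a ^ 2 ≤ b ^ 2 by nlinarith).trans hx.ge, hx.le⟩

end Annulus

section Polar

def polar (p : ℝ × ℝ) : ℝ × ℝ := (p.1 * cos p.2, p.1 * sin p.2)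

/-- For `F = (f, g)`, `radialFlux f g (r, θ) = r F_r` and `angularFlux f g (r, θ) = F_θ`,
evaluated at the point with polar coordinates `(r, θ)`. -/
def radialFlux (f g : ℝ × ℝ → ℝ) (p : ℝ × ℝ) : ℝ :=
  f (polar p) * (polar p).1 + g (polar p) * (polar p).2

def angularFlux (f g : ℝ × ℝ → ℝ) (p : ℝ × ℝ) : ℝ :=
  -(f (polar p) * sin p.2) + g (polar p) * cos p.2

variable {a b : ℝ} {f g : ℝ × ℝ → ℝ}

lemma polar_fst_sq_add_snd_sq (p : ℝ × ℝ) : (polar p).1 ^ 2 + (polar p).2 ^ 2 = p.1 ^ 2 := by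
  simp only [polar]
  linear_combination p.1 ^ 2 * sin_sq_add_cos_sq p.2

lemma continuous_polar : Continuous polar := by unfold polar; fun_prop

@[fun_prop]
lemma differentiable_polar : Differentiable ℝ polar := by unfold polar; fun_prop

lemma polar_mem_ann_iff {r θ : ℝ} (ha : 0 ≤ a) (hb : 0 ≤ b) (hr : 0 < r) :
    polar (r, θ) ∈ ann a b ↔ r ∈ Ioo a b := by
  simp only [ann, mem_ofPred_eq, polar_fst_sq_add_snd_sq, mem_Ioo]
  constructor
  · rintro ⟨h₁, h₂⟩
    exact ⟨by nlinarith, by nlinarith⟩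
  · rintro ⟨h₁, h₂⟩
    exact ⟨by nlinarith, by nlinarith⟩

lemma mapsTo_polar_cann (ha : 0 ≤ a) : MapsTo polar (Icc (a, -π) (b, π)) (cann a b) := by
  rintro ⟨r, θ⟩ ⟨⟨har, -⟩, ⟨hrb, -⟩⟩
  refine ⟨?_, ?_⟩ <;> rw [polar_fst_sq_add_snd_sq] <;> dsimp only at * <;> nlinarith

theorem setIntegral_ann_eq_polar (ha : 0 ≤ a) (hb : 0 ≤ b) (g : ℝ × ℝ → ℝ) :
    ∫ x in ann a b, g x = ∫ p in Icc (a, -π) (b, π), p.1 * g (polar p) := by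
  have hind : ∀ p ∈ polarCoord.target, p.1 • (ann a b).indicator g (polarCoord.symm p)
      = (Ioo a b ×ˢ univ).indicator (fun p => p.1 * g (polar p)) p := by
    rintro ⟨r, θ⟩ ⟨hr, -⟩
    rw [show polarCoord.symm (r, θ) = polar (r, θ) from polarCoord_symm_apply _, smul_eq_mul]
    by_cases h : r ∈ Ioo a b
    · rw [indicator_of_mem ((polar_mem_ann_iff ha hb hr).2 h),
        indicator_of_mem (mk_mem_prod h (mem_univ θ))]
    · rw [indicator_of_notMem (mt (polar_mem_ann_iff ha hb hr).1 h),
        indicator_of_notMem (fun h' => h h'.1), mul_zero]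
  have hset : polarCoord.target ∩ Ioo a b ×ˢ univ = Ioo a b ×ˢ Ioo (-π) π := by
    rw [polarCoord_target, prod_inter_prod, inter_univ, inter_eq_right.2]
    exact fun r hr => ha.trans_lt hr.1
  rw [← integral_indicator (isOpen_ann a b).measurableSet, ← integral_comp_polarCoord_symm,
    setIntegral_congr_fun polarCoord.open_target.measurableSet hind,
    setIntegral_indicator (measurableSet_Ioo.prod MeasurableSet.univ), hset, ← Icc_prod_Icc]
  exact setIntegral_congr_set (Measure.set_prod_ae_eq Ioo_ae_eq_Icc Ioo_ae_eq_Icc)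

lemma hasDerivAt_polar_fst (r θ : ℝ) :
    HasDerivAt (fun s => polar (s, θ)) (cos θ, sin θ) r :=
  (hasDerivAt_mul_const (cos θ)).prodMk (hasDerivAt_mul_const (sin θ))

lemma hasDerivAt_polar_snd (r θ : ℝ) :
    HasDerivAt (fun t => polar (r, t)) (-(r * sin θ), r * cos θ) θ := by
  have h := ((hasDerivAt_cos θ).const_mul r).prodMk ((hasDerivAt_sin θ).const_mul r)
  rw [mul_neg] at h
  exact h

lemma differentiableAt_radialFlux {p : ℝ × ℝ} (hf : DifferentiableAt ℝ f (polar p))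
    (hg : DifferentiableAt ℝ g (polar p)) : DifferentiableAt ℝ (radialFlux f g) p := by
  unfold radialFlux
  have hf' := hf.comp p (differentiable_polar p)
  have hg' := hg.comp p (differentiable_polar p)
  fun_prop

lemma differentiableAt_angularFlux {p : ℝ × ℝ} (hf : DifferentiableAt ℝ f (polar p))
    (hg : DifferentiableAt ℝ g (polar p)) : DifferentiableAt ℝ (angularFlux f g) p := by
  unfold angularFlux
  have hf' := hf.comp p (differentiable_polar p)
  have hg' := hg.comp p (differentiable_polar p)
  fun_prop

lemma pd1_radialFlux_add_pd2_angularFlux {r θ : ℝ} (hf : DifferentiableAt ℝ f (polar (r, θ)))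
    (hg : DifferentiableAt ℝ g (polar (r, θ))) :
    pd1 (radialFlux f g) (r, θ) + pd2 (angularFlux f g) (r, θ)
      = r * (pd1 f (polar (r, θ)) + pd2 g (polar (r, θ))) := by
  have hf₁ := hf.hasDerivAt_comp_curve (γ := fun s => polar (s, θ)) (hasDerivAt_polar_fst r θ)
  have hg₁ := hg.hasDerivAt_comp_curve (γ := fun s => polar (s, θ)) (hasDerivAt_polar_fst r θ)
  have hf₂ := hf.hasDerivAt_comp_curve (γ := fun t => polar (r, t)) (hasDerivAt_polar_snd r θ)
  have hg₂ := hg.hasDerivAt_comp_curve (γ := fun t => polar (r, t)) (hasDerivAt_polar_snd r θ)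
  rw [pd1_eq_of_hasDerivAt (differentiableAt_radialFlux hf hg)
      ((hf₁.mul (hasDerivAt_polar_fst r θ).fst).add (hg₁.mul (hasDerivAt_polar_fst r θ).snd)),
    pd2_eq_of_hasDerivAt (differentiableAt_angularFlux hf hg)
      ((hf₂.mul (hasDerivAt_sin θ)).neg.add (hg₂.mul (hasDerivAt_cos θ)))]
  unfold polar
  linear_combination (r * (pd1 f (r * cos θ, r * sin θ) + pd2 g (r * cos θ, r * sin θ)))
    * sin_sq_add_cos_sq θ

lemma angularFlux_neg_pi (f g : ℝ × ℝ → ℝ) (r : ℝ) :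
    angularFlux f g (r, -π) = angularFlux f g (r, π) := by
  simp [angularFlux, polar]

lemma intervalIntegral_radialFlux_eq_bInt (f g : ℝ × ℝ → ℝ) {r : ℝ} (hr : r ≠ 0) :
    ∫ θ in (-π)..π, radialFlux f g (r, θ) = bInt r (fun x => (f x * x.1 + g x * x.2) / r) := by
  have hper : Function.Periodic (fun θ => radialFlux f g (r, θ)) (2 * π) := fun θ => by
    simp [radialFlux, polar]
  have h := hper.intervalIntegral_add_eq (-π) 0
  rw [show -π + 2 * π = π by ring, zero_add] at h
  rw [h, bInt]
  refine intervalIntegral.integral_congr fun θ _ => ?_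
  simp only [radialFlux, polar]
  field_simp

end Polar

lemma bInt_congr {r : ℝ} {f g : ℝ × ℝ → ℝ} (h : ∀ x ∈ circ r, f x = g x) :
    bInt r f = bInt r g :=
  intervalIntegral.integral_congr fun θ _ =>
    congrArg (· * r) (h (polar (r, θ)) (polar_fst_sq_add_snd_sq (r, θ)))

lemma bInt_const_mul (r c : ℝ) (f : ℝ × ℝ → ℝ) :
    bInt r (fun x => c * f x) = c * bInt r f := by
  simp only [bInt, mul_assoc, intervalIntegral.integral_const_mul]

theorem integral_ann_divergence {a b : ℝ} {f g : ℝ × ℝ → ℝ} {U : Set (ℝ × ℝ)} (ha : 0 < a)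
    (hab : a ≤ b) (hU : IsOpen U) (hUc : cann a b ⊆ U) (hf : ContDiffOn ℝ 1 f U)
    (hg : ContDiffOn ℝ 1 g U) :
    ∫ x in ann a b, (pd1 f x + pd2 g x)
      = bInt b (fun x => (f x * x.1 + g x * x.2) / b)
        - bInt a (fun x => (f x * x.1 + g x * x.2) / a) := by
  have hmaps : MapsTo polar (Icc (a, -π) (b, π)) U := (mapsTo_polar_cann ha.le).mono_right hUc
  have hdiff : ∀ {h : ℝ × ℝ → ℝ}, ContDiffOn ℝ 1 h U →
      ∀ p ∈ Icc (a, -π) (b, π), DifferentiableAt ℝ h (polar p) := fun hh p hp =>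
    (hh.contDiffAt (hU.mem_nhds (hmaps hp))).differentiableAt one_ne_zero
  have hfc := hf.continuousOn.comp continuous_polar.continuousOn hmaps
  have hgc := hg.continuousOn.comp continuous_polar.continuousOn hmaps
  have hIcc : Ioo a b ×ˢ Ioo (-π) π ⊆ Icc (a, -π) (b, π) := fun p hp =>
    ⟨⟨hp.1.1.le, hp.2.1.le⟩, ⟨hp.1.2.le, hp.2.2.le⟩⟩
  have hdiv : ∀ p ∈ Icc (a, -π) (b, π), p.1 * (pd1 f (polar p) + pd2 g (polar p))
      = fderiv ℝ (radialFlux f g) p (1, 0) + fderiv ℝ (angularFlux f g) p (0, 1) :=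
    fun p hp => (pd1_radialFlux_add_pd2_angularFlux (hdiff hf p hp) (hdiff hg p hp)).symm
  have hcont : ContinuousOn (fun p => p.1 * (pd1 f (polar p) + pd2 g (polar p)))
      (Icc (a, -π) (b, π)) :=
    continuousOn_fst.mul (((hf.pd1 hU (m := 0) (by norm_num)).continuousOn.comp
      continuous_polar.continuousOn hmaps).add ((hg.pd2 hU (m := 0) (by norm_num)).continuousOn.comp
      continuous_polar.continuousOn hmaps))
  rw [setIntegral_ann_eq_polar ha.le (ha.le.trans hab),
    setIntegral_congr_fun measurableSet_Icc hdiv,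
    integral_divergence_prod_Icc_of_hasFDerivAt_of_le (radialFlux f g) (angularFlux f g) _ _
      (a, -π) (b, π) ⟨hab, by linarith [pi_pos]⟩ ?_ ?_
      (fun p hp => (differentiableAt_radialFlux (hdiff hf p (hIcc hp))
        (hdiff hg p (hIcc hp))).hasFDerivAt)
      (fun p hp => (differentiableAt_angularFlux (hdiff hf p (hIcc hp))
        (hdiff hg p (hIcc hp))).hasFDerivAt)
      ((hcont.congr fun p hp => (hdiv p hp).symm).integrableOn_compact isCompact_Icc)]
  · simp only [angularFlux_neg_pi, sub_self, zero_add]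
    rw [intervalIntegral_radialFlux_eq_bInt f g (ha.trans_le hab).ne',
      intervalIntegral_radialFlux_eq_bInt f g ha.ne']
  · exact (hfc.mul continuous_polar.fst.continuousOn).add
      (hgc.mul continuous_polar.snd.continuousOn)
  · exact (hfc.mul (continuous_sin.comp continuous_snd).continuousOn).neg.add
      (hgc.mul (continuous_cos.comp continuous_snd).continuousOn)

/-- `w · ∂_ν v` on the circle of radius `r`, where `ν = x / r` is the outward normal
of the disc. -/
def normalDerivDot (r : ℝ) (v w : ℝ × ℝ → ℝ × ℝ) (x : ℝ × ℝ) : ℝ :=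
  (((w x).1 * pd1 (cmp1 v) x + (w x).2 * pd1 (cmp2 v) x) * x.1
    + ((w x).1 * pd2 (cmp1 v) x + (w x).2 * pd2 (cmp2 v) x) * x.2) / r

lemma ContinuousOn.integrableOn_ann {a b : ℝ} {f : ℝ × ℝ → ℝ} {U : Set (ℝ × ℝ)}
    (hf : ContinuousOn f U) (hUc : cann a b ⊆ U) : IntegrableOn f (ann a b) :=
  ((hf.mono hUc).integrableOn_compact (isCompact_cann a b)).mono_set
    fun _ hx => ⟨hx.1.le, hx.2.le⟩

section GreenFirstIdentity

variable {v w : ℝ × ℝ → ℝ × ℝ} {U : Set (ℝ × ℝ)}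

lemma pd1_add_pd2_flux {y : ℝ × ℝ} (hU : IsOpen U) (hv : ContDiffOn ℝ 2 v U)
    (hw : ContDiffOn ℝ 1 w U) (hy : y ∈ U) :
    pd1 (fun y => cmp1 w y * pd1 (cmp1 v) y + cmp2 w y * pd1 (cmp2 v) y) y
        + pd2 (fun y => cmp1 w y * pd2 (cmp1 v) y + cmp2 w y * pd2 (cmp2 v) y) y
      = ((pd1 (pd1 (cmp1 v)) y + pd2 (pd2 (cmp1 v)) y) * (w y).1
          + (pd1 (pd1 (cmp2 v)) y + pd2 (pd2 (cmp2 v)) y) * (w y).2)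
        + (pd1 (cmp1 v) y * pd1 (cmp1 w) y + pd1 (cmp2 v) y * pd1 (cmp2 w) y
            + pd2 (cmp1 v) y * pd2 (cmp1 w) y + pd2 (cmp2 v) y * pd2 (cmp2 w) y) := by
  have hdiff : ∀ {h : ℝ × ℝ → ℝ}, ContDiffOn ℝ 1 h U → DifferentiableAt ℝ h y :=
    fun hh => (hh.contDiffAt (hU.mem_nhds hy)).differentiableAt one_ne_zero
  have hv₁ : ContDiffOn ℝ 2 (cmp1 v) U := hv.fst
  have hv₂ : ContDiffOn ℝ 2 (cmp2 v) U := hv.snd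
  have hw₁ : ContDiffOn ℝ 1 (cmp1 w) U := hw.fst
  have hw₂ : ContDiffOn ℝ 1 (cmp2 w) U := hw.snd
  rw [pd1, pd2, fderiv_mul_add_mul_apply (hdiff hw₁) (hdiff (hv₁.pd1 hU (m := 1) le_rfl))
      (hdiff hw₂) (hdiff (hv₂.pd1 hU (m := 1) le_rfl)),
    fderiv_mul_add_mul_apply (hdiff hw₁) (hdiff (hv₁.pd2 hU (m := 1) le_rfl))
      (hdiff hw₂) (hdiff (hv₂.pd2 hU (m := 1) le_rfl))]
  simp only [pd1, pd2, cmp1, cmp2]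
  ring

theorem green_first_identity_ann {a b : ℝ} (ha : 0 < a) (hab : a ≤ b) (hU : IsOpen U)
    (hUc : cann a b ⊆ U) (hv : ContDiffOn ℝ 2 v U) (hw : ContDiffOn ℝ 1 w U) :
    (∫ x in ann a b,
        ((pd1 (pd1 (cmp1 v)) x + pd2 (pd2 (cmp1 v)) x) * (w x).1
          + (pd1 (pd1 (cmp2 v)) x + pd2 (pd2 (cmp2 v)) x) * (w x).2))
      + (∫ x in ann a b,
          (pd1 (cmp1 v) x * pd1 (cmp1 w) x + pd1 (cmp2 v) x * pd1 (cmp2 w) x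
            + pd2 (cmp1 v) x * pd2 (cmp1 w) x + pd2 (cmp2 v) x * pd2 (cmp2 w) x))
      = bInt b (normalDerivDot b v w) - bInt a (normalDerivDot a v w) := by
  have hv₁ : ContDiffOn ℝ 2 (cmp1 v) U := hv.fst
  have hv₂ : ContDiffOn ℝ 2 (cmp2 v) U := hv.snd
  have hw₁ : ContDiffOn ℝ 1 (cmp1 w) U := hw.fst
  have hw₂ : ContDiffOn ℝ 1 (cmp2 w) U := hw.snd
  have hv₁₁ := hv₁.pd1 hU (m := 1) le_rfl
  have hv₁₂ := hv₁.pd2 hU (m := 1) le_rfl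
  have hv₂₁ := hv₂.pd1 hU (m := 1) le_rfl
  have hv₂₂ := hv₂.pd2 hU (m := 1) le_rfl
  have hpd_cont : ∀ {h : ℝ × ℝ → ℝ}, ContDiffOn ℝ 1 h U →
      ContinuousOn (pd1 h) U ∧ ContinuousOn (pd2 h) U := fun hh =>
    ⟨(hh.pd1 hU (m := 0) (by norm_num)).continuousOn,
      (hh.pd2 hU (m := 0) (by norm_num)).continuousOn⟩
  have hwc : ContinuousOn w U := hw.continuousOn
  obtain ⟨hw₁₁, hw₁₂⟩ := hpd_cont hw₁
  obtain ⟨hw₂₁, hw₂₂⟩ := hpd_cont hw₂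
  obtain ⟨hv₁₁c, hv₁₂c⟩ := hpd_cont (hv₁.of_le one_le_two)
  obtain ⟨hv₂₁c, hv₂₂c⟩ := hpd_cont (hv₂.of_le one_le_two)
  obtain ⟨hv₁₁₁, -⟩ := hpd_cont hv₁₁
  obtain ⟨-, hv₁₂₂⟩ := hpd_cont hv₁₂
  obtain ⟨hv₂₁₁, -⟩ := hpd_cont hv₂₁
  obtain ⟨-, hv₂₂₂⟩ := hpd_cont hv₂₂
  rw [← integral_add (ContinuousOn.integrableOn_ann (by fun_prop) hUc)
      (ContinuousOn.integrableOn_ann (by fun_prop) hUc),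
    ← setIntegral_congr_fun (isOpen_ann a b).measurableSet
      fun y hy => pd1_add_pd2_flux hU hv hw (hUc ⟨hy.1.le, hy.2.le⟩)]
  exact integral_ann_divergence ha hab hU hUc ((hw₁.mul hv₁₁).add (hw₂.mul hv₂₁))
    ((hw₁.mul hv₁₂).add (hw₂.mul hv₂₂))

end GreenFirstIdentity

section BoundaryTerms

variable {v w : ℝ × ℝ → ℝ × ℝ} {r : ℝ} {x : ℝ × ℝ}

lemma dot_tangential_pd_eq_of_tangent (hx : x ∈ circ r) (hv₁ : DifferentiableAt ℝ (cmp1 v) x)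
    (hv₂ : DifferentiableAt ℝ (cmp2 v) x)
    (hvt : ∀ y ∈ circ r, (v y).1 * y.1 + (v y).2 * y.2 = 0) :
    x.1 * (x.1 * pd2 (cmp1 v) x - x.2 * pd1 (cmp1 v) x)
      + x.2 * (x.1 * pd2 (cmp2 v) x - x.2 * pd1 (cmp2 v) x) = (v x).1 * x.2 - (v x).2 * x.1 := by
  have h := tangential_pd_eq_zero (f := fun y => cmp1 v y * y.1 + cmp2 v y * y.2) hx
    ((hv₁.mul differentiableAt_fst).add (hv₂.mul differentiableAt_snd)) hvt
  rw [pd1, pd2, fderiv_mul_add_mul_apply hv₁ differentiableAt_fst hv₂ differentiableAt_snd,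
    fderiv_mul_add_mul_apply hv₁ differentiableAt_fst hv₂ differentiableAt_snd] at h
  simp only [fderiv_fst, fderiv_snd, ContinuousLinearMap.coe_fst',
    ContinuousLinearMap.coe_snd'] at h
  rw [show cmp1 v x = (v x).1 from rfl, show cmp2 v x = (v x).2 from rfl] at h
  simp only [pd1, pd2]
  linear_combination h

lemma normalDerivDot_mul_sq_of_tangent (hr : r ≠ 0) (hx : x ∈ circ r)
    (hw : (w x).1 * x.1 + (w x).2 * x.2 = 0) :
    normalDerivDot r v w x * r ^ 2 = tang r w x * (x.1 * x.2 * pd1 (cmp1 v) x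
      + x.2 ^ 2 * pd2 (cmp1 v) x - x.1 ^ 2 * pd1 (cmp2 v) x - x.1 * x.2 * pd2 (cmp2 v) x) := by
  simp only [circ, mem_ofPred_eq] at hx
  simp only [normalDerivDot, tang]
  field_simp
  linear_combination (x.1 * (x.1 * pd1 (cmp1 v) x + x.2 * pd2 (cmp1 v) x)
    + x.2 * (x.1 * pd1 (cmp2 v) x + x.2 * pd2 (cmp2 v) x)) * hw
    - (((w x).1 * pd1 (cmp1 v) x + (w x).2 * pd1 (cmp2 v) x) * x.1
      + ((w x).1 * pd2 (cmp1 v) x + (w x).2 * pd2 (cmp2 v) x) * x.2) * hx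

lemma normalDerivDot_eq_of_curl_eq_zero (hr : r ≠ 0) (hx : x ∈ circ r)
    (hv₁ : DifferentiableAt ℝ (cmp1 v) x) (hv₂ : DifferentiableAt ℝ (cmp2 v) x)
    (hvt : ∀ y ∈ circ r, (v y).1 * y.1 + (v y).2 * y.2 = 0)
    (hw : (w x).1 * x.1 + (w x).2 * x.2 = 0) (hcurl : pd1 (cmp2 v) x - pd2 (cmp1 v) x = 0) :
    normalDerivDot r v w x = -(1 / r) * (tang r v x * tang r w x) := by
  have hrot := dot_tangential_pd_eq_of_tangent hx hv₁ hv₂ hvt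
  have hB : x.1 * x.2 * pd1 (cmp1 v) x + x.2 ^ 2 * pd2 (cmp1 v) x - x.1 ^ 2 * pd1 (cmp2 v) x
      - x.1 * x.2 * pd2 (cmp2 v) x = -((v x).1 * x.2 - (v x).2 * x.1) := by
    have hx' : x.1 ^ 2 + x.2 ^ 2 = r ^ 2 := hx
    linear_combination -hrot + (pd2 (cmp1 v) x - pd1 (cmp2 v) x) * hx' - r ^ 2 * hcurl
  apply mul_right_cancel₀ (pow_ne_zero 2 hr)
  rw [normalDerivDot_mul_sq_of_tangent hr hx hw, hB, tang, tang]
  field_simp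

lemma normalDerivDot_eq_of_navierSlip {μ α : ℝ} (hr : r ≠ 0) (hμ : μ ≠ 0) (hx : x ∈ circ r)
    (hv₁ : DifferentiableAt ℝ (cmp1 v) x) (hv₂ : DifferentiableAt ℝ (cmp2 v) x)
    (hvt : ∀ y ∈ circ r, (v y).1 * y.1 + (v y).2 * y.2 = 0)
    (hw : (w x).1 * x.1 + (w x).2 * x.2 = 0) (hns : navierSlip μ α r v) :
    normalDerivDot r v w x = (1 / r - α / μ) * (tang r v x * tang r w x) := by
  have hrot := dot_tangential_pd_eq_of_tangent hx hv₁ hv₂ hvt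
  have hslip := hns x hx
  have hB : x.1 * x.2 * pd1 (cmp1 v) x + x.2 ^ 2 * pd2 (cmp1 v) x - x.1 ^ 2 * pd1 (cmp2 v) x
      - x.1 * x.2 * pd2 (cmp2 v) x = (μ - α * r) * ((v x).1 * x.2 - (v x).2 * x.1) / μ := by
    field_simp at hslip ⊢
    linear_combination μ * hrot - hslip
  apply mul_right_cancel₀ (pow_ne_zero 2 hr)
  rw [normalDerivDot_mul_sq_of_tangent hr hx hw, hB, tang, tang]
  field_simp

end BoundaryTerms

theorem green_identity_annulus_general (a b μ α : ℝ)
    (ha : 0 < a) (hab : a < b) (hμ : 0 < μ)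
    (v w : ℝ × ℝ → ℝ × ℝ)
    (U : Set (ℝ × ℝ)) (hU : IsOpen U) (hUc : cann a b ⊆ U)
    (hv : ContDiffOn ℝ 2 v U) (hw : ContDiffOn ℝ 1 w U)
    (hvt : ∀ x : ℝ × ℝ, (x.1 ^ 2 + x.2 ^ 2 = a ^ 2 ∨ x.1 ^ 2 + x.2 ^ 2 = b ^ 2) →
      (v x).1 * x.1 + (v x).2 * x.2 = 0)
    (hwt : ∀ x : ℝ × ℝ, (x.1 ^ 2 + x.2 ^ 2 = a ^ 2 ∨ x.1 ^ 2 + x.2 ^ 2 = b ^ 2) →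
      (w x).1 * x.1 + (w x).2 * x.2 = 0)
    (hcurl : ∀ x : ℝ × ℝ, x.1 ^ 2 + x.2 ^ 2 = b ^ 2 →
      pd1 (cmp2 v) x - pd2 (cmp1 v) x = 0)
    (hns : navierSlip μ α a v) :
    -(∫ x in ann a b,
        ((pd1 (pd1 (cmp1 v)) x + pd2 (pd2 (cmp1 v)) x) * (w x).1
          + (pd1 (pd1 (cmp2 v)) x + pd2 (pd2 (cmp2 v)) x) * (w x).2))
      = (∫ x in ann a b,
          (pd1 (cmp1 v) x * pd1 (cmp1 w) x + pd1 (cmp2 v) x * pd1 (cmp2 w) x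
            + pd2 (cmp1 v) x * pd2 (cmp1 w) x + pd2 (cmp2 v) x * pd2 (cmp2 w) x))
        + (1 / a - α / μ) * bInt a (fun x => tang a v x * tang a w x)
        + (1 / b) * bInt b (fun x => tang b v x * tang b w x) := by
  have hdiff : ∀ {h : ℝ × ℝ → ℝ}, ContDiffOn ℝ 2 h U → ∀ x ∈ cann a b, DifferentiableAt ℝ h x :=
    fun hh x hx => (hh.contDiffAt (hU.mem_nhds (hUc hx))).differentiableAt two_ne_zero
  have houter : ∀ x ∈ circ b, normalDerivDot b v w x = -(1 / b) * (tang b v x * tang b w x) :=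
    fun x hx =>
      have hx' := circ_subset_cann_right ha.le hab.le hx
      normalDerivDot_eq_of_curl_eq_zero (ha.trans hab).ne' hx (hdiff hv.fst x hx')
        (hdiff hv.snd x hx') (fun y hy => hvt y (Or.inr hy)) (hwt x (Or.inr hx)) (hcurl x hx)
  have hinner : ∀ x ∈ circ a,
      normalDerivDot a v w x = (1 / a - α / μ) * (tang a v x * tang a w x) :=
    fun x hx =>
      have hx' := circ_subset_cann_left ha.le hab.le hx
      normalDerivDot_eq_of_navierSlip ha.ne' hμ.ne' hx (hdiff hv.fst x hx')
        (hdiff hv.snd x hx') (fun y hy => hvt y (Or.inl hy)) (hwt x (Or.inl hx)) hns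
  have hgreen := green_first_identity_ann ha hab.le hU hUc hv hw
  rw [bInt_congr houter, bInt_congr hinner, bInt_const_mul, bInt_const_mul] at hgreen
  linarith

/-- Green-type integration-by-parts identity on the annulus for a field `v`
satisfying the mixed boundary conditions and any tangent field `w`. -/
theorem green_identity_annulus (a b μ α : ℝ)
    (ha : 0 < a) (hab : a < b) (hμ : 0 < μ) (hα : 0 < α)
    (v w : ℝ × ℝ → ℝ × ℝ)
    (U : Set (ℝ × ℝ)) (hU : IsOpen U) (hUc : cann a b ⊆ U)
    (hv : ContDiffOn ℝ 2 v U) (hw : ContDiffOn ℝ 1 w U)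
    (hvt : ∀ x : ℝ × ℝ, (x.1 ^ 2 + x.2 ^ 2 = a ^ 2 ∨ x.1 ^ 2 + x.2 ^ 2 = b ^ 2) →
      (v x).1 * x.1 + (v x).2 * x.2 = 0)
    (hwt : ∀ x : ℝ × ℝ, (x.1 ^ 2 + x.2 ^ 2 = a ^ 2 ∨ x.1 ^ 2 + x.2 ^ 2 = b ^ 2) →
      (w x).1 * x.1 + (w x).2 * x.2 = 0)
    (hcurl : ∀ x : ℝ × ℝ, x.1 ^ 2 + x.2 ^ 2 = b ^ 2 →
      pd1 (cmp2 v) x - pd2 (cmp1 v) x = 0)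
    (hns : navierSlip μ α a v) :
    -(∫ x in ann a b,
        ((pd1 (pd1 (cmp1 v)) x + pd2 (pd2 (cmp1 v)) x) * (w x).1
          + (pd1 (pd1 (cmp2 v)) x + pd2 (pd2 (cmp2 v)) x) * (w x).2))
      = (∫ x in ann a b,
          (pd1 (cmp1 v) x * pd1 (cmp1 w) x + pd1 (cmp2 v) x * pd1 (cmp2 w) x
            + pd2 (cmp1 v) x * pd2 (cmp1 w) x + pd2 (cmp2 v) x * pd2 (cmp2 w) x))
        + (1 / a - α / μ) * bInt a (fun x => tang a v x * tang a w x)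
        + (1 / b) * bInt b (fun x => tang b v x * tang b w x) :=
  green_identity_annulus_general a b μ α ha hab hμ v w U hU hUc hv hw hvt hwt hcurl hns
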